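/- arXiv:2102.00137 — 2 statements merged into one kernel-verified Lean document; each statement's English description precedes it below -/
import Mathlib

section
/- For every real number x and every nonnegative integer n, x^n equals (1/(2^{n+1}(n+1))) times the sum over k from 0 to n+1 of binom(n+1,k) times the 2x2 determinant with entries B_{n+1-k}(x+1), E_k(x) in the first row and B_{n+1-k}(x), E_k(x+1) in the second row, i.e. x^n = (1/(2^{n+1}(n+1))) * Σ_{k=0}^{n+1} C(n+1,k) * (B_{n+1-k}(x+1)*E_k(x+1) - B_{n+1-k}(x)*E_k(x)). -/
open PowerSeries Finset

/-- `E n x` are the classical Euler polynomials: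
`2 e^{xt} = (e^t + 1) · Σ E_n(x) t^n/n!` as formal power series over ℝ. -/
def IsEulerPoly (E : ℕ → ℝ → ℝ) : Prop :=
  ∀ x : ℝ,
    (PowerSeries.exp ℝ + 1) * PowerSeries.mk (fun n => E n x / n.factorial) =
      (PowerSeries.C 2 : PowerSeries ℝ) * PowerSeries.rescale x (PowerSeries.exp ℝ)

theorem monomial_det_representation (E : ℕ → ℝ → ℝ) (hE : IsEulerPoly E) (n : ℕ) (x : ℝ) :
    x ^ n = (1 / (2 ^ (n + 1) * (n + 1) : ℝ)) *
      ∑ k ∈ Finset.range (n + 2), ((n + 1).choose k : ℝ) *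
        ((Polynomial.aeval (x + 1) (Polynomial.bernoulli (n + 1 - k))) * E k (x + 1) -
          (Polynomial.aeval x (Polynomial.bernoulli (n + 1 - k))) * E k x) := by
  classical
  set B : ℕ → ℝ → ℝ := fun m y => Polynomial.aeval y (Polynomial.bernoulli m) with hBdef
  have hBgen : ∀ y : ℝ,
      (PowerSeries.mk fun m => B m y / m.factorial) * (exp ℝ - 1)
        = X * rescale y (exp ℝ) := by
    intro y
    have h := Polynomial.bernoulli_generating_function (A := ℝ) y
    rw [← h]
    congr 1
    ext m
    simp only [coeff_mk, hBdef, map_smul, Rat.smul_def]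
    push_cast
    ring
  have hexp2 : exp ℝ * exp ℝ = rescale (2 : ℝ) (exp ℝ) := by
    have h := exp_mul_exp_eq_exp_add (1 : ℝ) 1
    norm_num at h
    exact h
  have key : ∀ y : ℝ,
      ((PowerSeries.mk fun m => E m y / m.factorial) *
        (PowerSeries.mk fun m => B m y / m.factorial))
        * (rescale (2:ℝ) (exp ℝ) - 1)
      = C (2:ℝ) * (X * rescale (2*y) (exp ℝ)) := by
    intro y
    have h1 := hBgen y
    have h2 := hE y
    have h3 : rescale y (exp ℝ) * rescale y (exp ℝ) = rescale (2*y) (exp ℝ) := by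
      rw [show (2:ℝ)*y = y + y by ring, ← exp_mul_exp_eq_exp_add]
    calc (PowerSeries.mk fun m => E m y / m.factorial) *
        (PowerSeries.mk fun m => B m y / m.factorial) * (rescale (2:ℝ) (exp ℝ) - 1)
        = ((PowerSeries.mk fun m => B m y / m.factorial) * (exp ℝ - 1)) *
          ((exp ℝ + 1) * (PowerSeries.mk fun m => E m y / m.factorial)) := by
          rw [← hexp2]; ring
      _ = (X * rescale y (exp ℝ)) * (C (2:ℝ) * rescale y (exp ℝ)) := by rw [h1, h2]
      _ = C (2:ℝ) * (X * rescale (2*y) (exp ℝ)) := by rw [← h3]; ring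
  have hne : (rescale (2:ℝ) (exp ℝ) - 1 : ℝ⟦X⟧) ≠ 0 := by
    intro h
    have h1 := congrArg (coeff 1) h
    simp [coeff_rescale, coeff_exp, coeff_one] at h1
  have key2 :
      (PowerSeries.mk fun m => E m (x+1) / m.factorial) *
        (PowerSeries.mk fun m => B m (x+1) / m.factorial)
      - (PowerSeries.mk fun m => E m x / m.factorial) *
        (PowerSeries.mk fun m => B m x / m.factorial)
      = C (2:ℝ) * (X * rescale (2*x) (exp ℝ)) := by
    apply mul_right_cancel₀ hne
    rw [sub_mul, key (x+1), key x]
    have h4 : rescale (2*(x+1)) (exp ℝ) = rescale (2*x) (exp ℝ) * rescale (2:ℝ) (exp ℝ) := by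
      rw [show (2:ℝ)*(x+1) = 2*x + 2 by ring, ← exp_mul_exp_eq_exp_add]
    rw [h4]; ring
  have key3 := congrArg (coeff (n+1)) key2
  rw [map_sub, coeff_mul, coeff_mul,
    Finset.Nat.sum_antidiagonal_eq_sum_range_succ_mk,
    Finset.Nat.sum_antidiagonal_eq_sum_range_succ_mk] at key3
  simp only [coeff_mk] at key3
  have hrhs : (coeff (n+1)) (C (2:ℝ) * (X * rescale (2*x) (exp ℝ)))
      = 2 * ((2*x)^n / n.factorial) := by
    rw [coeff_C_mul, coeff_succ_X_mul, coeff_rescale, coeff_exp]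
    push_cast
    ring
  rw [hrhs] at key3
  -- now the finishing arithmetic
  have hfac : ∀ k ∈ Finset.range (n+2),
      ((n + 1).choose k : ℝ) *
        ((B (n + 1 - k) (x+1)) * E k (x + 1) - (B (n + 1 - k) x) * E k x)
      = ((n+1).factorial : ℝ) *
        ((E k (x+1) / k.factorial * (B (n+1-k) (x+1) / (n+1-k).factorial))
          - (E k x / k.factorial * (B (n+1-k) x / (n+1-k).factorial))) := by
    intro k hk
    rw [Finset.mem_range] at hk
    have hk' : k ≤ n + 1 := by omega
    rw [Nat.cast_choose ℝ hk']
    have h1 : (k.factorial : ℝ) ≠ 0 := Nat.cast_ne_zero.2 k.factorial_ne_zero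
    have h2 : ((n+1-k).factorial : ℝ) ≠ 0 := Nat.cast_ne_zero.2 (n+1-k).factorial_ne_zero
    field_simp
    try ring
    try exact Or.inl trivial
  have hsum : ∑ k ∈ Finset.range (n + 2), ((n + 1).choose k : ℝ) *
        ((B (n + 1 - k) (x+1)) * E k (x + 1) - (B (n + 1 - k) x) * E k x)
      = 2 ^ (n+1) * (n+1) * x ^ n := by
    rw [Finset.sum_congr rfl hfac, ← Finset.mul_sum]
    rw [show (n+1).succ = n+2 from rfl] at key3
    rw [Finset.sum_sub_distrib, key3]
    rw [Nat.factorial_succ]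
    have hn : (n.factorial : ℝ) ≠ 0 := Nat.cast_ne_zero.2 n.factorial_ne_zero
    push_cast
    field_simp
    ring
  rw [hsum]
  have h2 : (2:ℝ)^(n+1) * (n+1) ≠ 0 := by positivity
  field_simp
end

section
/- Raabe's multiplication theorem for Bernoulli polynomials: for every positive integer m, nonnegative integer n, and real x, Σ_{k=0}^{m−1} B_n((x+k)/m) = m^{1−n} B_n(x). -/
open PowerSeries Finset

open Polynomial Nat


noncomputable def Bser (t : ℝ) : PowerSeries ℝ :=
  PowerSeries.mk fun n => Polynomial.aeval t ((1 / n ! : ℚ) • Polynomial.bernoulli n)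

lemma exp_sub_one_ne : (exp ℝ - 1 : PowerSeries ℝ) ≠ 0 := by
  intro h
  have := congrArg (PowerSeries.coeff (R := ℝ) 1) h
  simp [coeff_exp] at this

lemma geom_telescope (m : ℕ) (hm : 0 < m) :
    (∑ k ∈ range m, rescale ((k : ℝ)/m) (exp ℝ)) * (rescale ((m:ℝ)⁻¹) (exp ℝ) - 1) =
      exp ℝ - 1 := by
  have hm' : (m : ℝ) ≠ 0 := Nat.cast_ne_zero.mpr hm.ne'
  rw [Finset.sum_mul]
  have : ∀ k ∈ range m, rescale ((k : ℝ)/m) (exp ℝ) * (rescale ((m:ℝ)⁻¹) (exp ℝ) - 1)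
      = rescale (((k+1 : ℕ) : ℝ)/m) (exp ℝ) - rescale ((k : ℝ)/m) (exp ℝ) := by
    intro k _
    rw [mul_sub, mul_one, PowerSeries.exp_mul_exp_eq_exp_add]
    congr 2
    push_cast
    field_simp
  rw [Finset.sum_congr rfl this, Finset.sum_range_sub (fun k => rescale ((k : ℝ)/m) (exp ℝ))]
  simp [div_self hm', rescale_one, PowerSeries.rescale_zero]



lemma key_aux (m : ℕ) (hm : 0 < m) (x : ℝ) :
    ((m : ℝ) • rescale ((m:ℝ)⁻¹) (Bser x)) * (rescale ((m:ℝ)⁻¹) (exp ℝ) - 1) =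
      PowerSeries.X * rescale (x/(m:ℝ)) (exp ℝ) := by
  have hm' : (m : ℝ) ≠ 0 := Nat.cast_ne_zero.mpr hm.ne'
  rw [smul_mul_assoc, show (rescale ((m:ℝ)⁻¹) (exp ℝ) - 1 : PowerSeries ℝ)
      = rescale ((m:ℝ)⁻¹) (exp ℝ - 1) by rw [map_sub, map_one],
    ← map_mul, Bser, Polynomial.bernoulli_generating_function, map_mul, rescale_X,
    PowerSeries.rescale_rescale]
  rw [show (m:ℝ) • (PowerSeries.C (R := ℝ) (m:ℝ)⁻¹ * PowerSeries.X * (rescale (x * (m:ℝ)⁻¹)) (exp ℝ))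
      = ((m:ℝ) • (PowerSeries.C (R := ℝ) (m:ℝ)⁻¹ * PowerSeries.X)) * (rescale (x * (m:ℝ)⁻¹)) (exp ℝ)
    from (smul_mul_assoc _ _ _).symm]
  rw [show (m:ℝ) • (PowerSeries.C (R := ℝ) (m:ℝ)⁻¹ * PowerSeries.X) = PowerSeries.X by
    rw [PowerSeries.smul_eq_C_mul, ← mul_assoc, ← map_mul, mul_inv_cancel₀ hm', map_one, one_mul]]
  rw [mul_comm x (m:ℝ)⁻¹, inv_mul_eq_div]

lemma series_identity (m : ℕ) (hm : 0 < m) (x : ℝ) :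
    (∑ k ∈ range m, Bser ((x + k) / m)) = (m : ℝ) • rescale ((m:ℝ)⁻¹) (Bser x) := by
  apply mul_right_cancel₀ exp_sub_one_ne
  rw [Finset.sum_mul]
  have h1 : ∀ k ∈ range m, Bser ((x + k) / m) * (exp ℝ - 1)
      = PowerSeries.X * rescale (x/(m:ℝ)) (exp ℝ) * rescale ((k:ℝ)/m) (exp ℝ) := by
    intro k _
    rw [Bser, Polynomial.bernoulli_generating_function, mul_assoc,
      PowerSeries.exp_mul_exp_eq_exp_add, _root_.add_div]
  rw [Finset.sum_congr rfl h1, ← Finset.mul_sum, ← geom_telescope m hm,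
    ← key_aux m hm x]
  ring

theorem bernoulli_raabe (m : ℕ) (hm : 0 < m) (n : ℕ) (x : ℝ) :
    ∑ k ∈ Finset.range m, Polynomial.aeval ((x + k) / m) (Polynomial.bernoulli n) =
      (m : ℝ) ^ ((1 : ℤ) - n) * Polynomial.aeval x (Polynomial.bernoulli n) := by
  have hm' : (m : ℝ) ≠ 0 := Nat.cast_ne_zero.mpr hm.ne'
  have hf : ((n ! : ℚ) : ℝ) ≠ 0 := by
    exact_mod_cast (Nat.cast_ne_zero (R := ℝ)).mpr (Nat.factorial_ne_zero n)
  have h := congrArg (PowerSeries.coeff (R := ℝ) n) (series_identity m hm x)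
  simp only [map_sum, Bser, coeff_mk, coeff_rescale, map_smul, LinearMap.map_smul,
    PowerSeries.coeff_smul, Rat.smul_def, smul_eq_mul] at h
  push_cast at h
  rw [← Finset.mul_sum] at h
  rw [zpow_sub₀ hm', zpow_one, zpow_natCast]
  have hf' : ((n !:ℕ) : ℝ) ≠ 0 := Nat.cast_ne_zero.mpr (Nat.factorial_ne_zero n)
  have h2 := congrArg (fun y => (n ! : ℝ) * y) h
  simp only [one_div, ← mul_assoc, mul_inv_cancel₀ hf', one_mul] at h2
  rw [h2, inv_pow, div_eq_mul_inv]
  field_simp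
end
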